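/- Let X be a Banach function space on the torus 𝕋^d (d ≥ 2) such that (L^∞, X) is an interpolation couple, L^∞ ∩ X has a separable predual, and X ↪ H^{-m} for some m > d/2. Assume X is a Bourgain–Brezis space: for every vector field v ∈ X^d there is u ∈ (L^∞ ∩ X)^d with div u = div v (in the sense of distributions) and ‖u‖_{L^∞∩X} ≲ ‖v‖_X. Then for every θ ∈ (0,1), q ∈ [1,∞), the real interpolation space X_{θ,q} = (L^∞, X)_{θ,q} is also a Bourgain–Brezis space: div((L^∞ ∩ X_{θ,q})^d) = div(X_{θ,q}^d) with norm control. -/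

import Mathlib

open MeasureTheory Filter Topology Set
open scoped ENNReal

noncomputable section

/-- Distributions on the torus `𝕋^d`, modeled by their Fourier coefficients. -/
abbrev TorusCoeff (d : ℕ) := (Fin d → ℤ) → ℂ

/-- The fundamental cube `[0,1)^d` of the torus. -/
def torusCube (d : ℕ) : Set (Fin d → ℝ) := Set.univ.pi fun _ => Set.Ico (0:ℝ) 1

/-- Lebesgue measure restricted to the fundamental cube. -/
def μcube (d : ℕ) : Measure (Fin d → ℝ) := volume.restrict (torusCube d)

/-- The character `e^{2πi n·x}`. -/
def eChar (d : ℕ) (n : Fin d → ℤ) (x : Fin d → ℝ) : ℂ :=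
  Complex.exp (2 * Real.pi * Complex.I * (∑ j, (n j : ℝ) * x j : ℝ))

/-- The `n`-th Fourier coefficient of a function on the torus. -/
def coeffOf {d : ℕ} (f : (Fin d → ℝ) → ℂ) (n : Fin d → ℤ) : ℂ :=
  ∫ x in torusCube d, f x * eChar d (-n) x

/-- `f` is an `L^∞`-type representative of the distribution with coefficients `c`. -/
def Represents {d : ℕ} (f : (Fin d → ℝ) → ℂ) (c : TorusCoeff d) : Prop :=
  ∀ n, coeffOf f n = c n

/-- The Sobolev weight `(1+|n|²)^s`. -/
def sobW {d : ℕ} (s : ℝ) (n : Fin d → ℤ) : ℝ :=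
  (1 + ∑ j, ((n j : ℝ)) ^ 2) ^ s

/-- The `H^s(𝕋^d)` norm of a coefficient distribution. -/
def HsNorm {d : ℕ} (s : ℝ) (c : TorusCoeff d) : ℝ≥0∞ :=
  (∑' n : Fin d → ℤ, ENNReal.ofReal (sobW s n) * (‖c n‖₊ : ℝ≥0∞) ^ 2) ^ ((1 : ℝ) / 2)

/-- The `L^∞(𝕋^d)` norm of a coefficient distribution (`∞` if it is not a bounded
function): the infimum of `‖f‖_{L^∞}` over representatives `f`. -/
def LinfNorm {d : ℕ} (c : TorusCoeff d) : ℝ≥0∞ :=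
  ⨅ f : {f : (Fin d → ℝ) → ℂ // Represents f c}, eLpNorm f.1 ⊤ (μcube d)

/-- The divergence of a vector field, on Fourier coefficients:
`(div v)^(n) = 2πi Σ_j n_j v_j^(n)`. -/
def divC {d : ℕ} (v : Fin d → TorusCoeff d) : TorusCoeff d :=
  fun n => (2 * Real.pi * Complex.I) * ∑ j, (n j : ℂ) * v j n

/-- The K-functional of the couple `(L^∞(𝕋^d), X)` for a Banach function space `X`
realized via its coefficient map `jX : X → TorusCoeff d`:
`K(t,c) = inf{‖f‖_{L^∞} + t‖x‖_X : c = (coefficients of f) + jX x}`. -/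
def KLX {d : ℕ} {X : Type*} [NormedAddCommGroup X] [NormedSpace ℂ X]
    (jX : X →ₗ[ℂ] TorusCoeff d) (t : ℝ) (c : TorusCoeff d) : ℝ≥0∞ :=
  ⨅ p : {p : ((Fin d → ℝ) → ℂ) × X // ∀ n, coeffOf p.1 n + jX p.2 n = c n},
    (eLpNorm p.1.1 ⊤ (μcube d) + ENNReal.ofReal t * ENNReal.ofReal ‖p.1.2‖)

/-- The `(θ,q)` real interpolation norm of the couple `(L^∞(𝕋^d), X)`. -/
def interpLX {d : ℕ} {X : Type*} [NormedAddCommGroup X] [NormedSpace ℂ X]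
    (jX : X →ₗ[ℂ] TorusCoeff d) (θ q : ℝ) (c : TorusCoeff d) : ℝ≥0∞ :=
  (∫⁻ t in Set.Ioi (0:ℝ),
      (ENNReal.ofReal (t ^ (-θ)) * KLX jX t c) ^ q / ENNReal.ofReal t) ^ (1 / q)

lemma norm_eChar (d : ℕ) (n : Fin d → ℤ) (x : Fin d → ℝ) : ‖eChar d n x‖ = 1 := by
  unfold eChar
  have h : (2 * (Real.pi:ℂ) * Complex.I * ((∑ j, (n j : ℝ) * x j : ℝ) : ℂ))
      = (((2 * Real.pi * (∑ j, (n j : ℝ) * x j) : ℝ)) : ℂ) * Complex.I := by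
    push_cast; ring
  rw [h, Complex.norm_exp_ofReal_mul_I]

lemma eChar_mul_neg (d : ℕ) (n : Fin d → ℤ) (x : Fin d → ℝ) :
    eChar d (-n) x * eChar d n x = 1 := by
  unfold eChar
  rw [← Complex.exp_add]
  have h : (∑ j, ((-n) j : ℝ) * x j) = -(∑ j, (n j : ℝ) * x j) := by
    rw [← Finset.sum_neg_distrib]
    refine Finset.sum_congr rfl fun j _ => ?_
    simp [neg_mul]
  rw [h]
  push_cast
  ring_nf
  exact Complex.exp_zero

lemma continuous_eChar (d : ℕ) (n : Fin d → ℤ) : Continuous (eChar d n) := by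
  unfold eChar
  exact Complex.continuous_exp.comp <| by continuity

lemma volume_torusCube (d : ℕ) : volume (torusCube d) = 1 := by
  rw [torusCube, volume_pi_pi]
  simp

lemma μcube_univ (d : ℕ) : μcube d Set.univ = 1 := by
  rw [μcube, Measure.restrict_apply_univ, volume_torusCube]

instance isFiniteMeasure_μcube (d : ℕ) : IsFiniteMeasure (μcube d) :=
  ⟨by rw [μcube_univ]; exact ENNReal.one_lt_top⟩

lemma coeffOf_def {d : ℕ} (f : (Fin d → ℝ) → ℂ) (n : Fin d → ℤ) :
    coeffOf f n = ∫ x, f x * eChar d (-n) x ∂(μcube d) := rfl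

lemma lintegral_nnorm_le {d : ℕ} (f : (Fin d → ℝ) → ℂ) :
    ∫⁻ x, (‖f x‖₊ : ℝ≥0∞) ∂(μcube d) ≤ eLpNorm f ⊤ (μcube d) := by
  rw [eLpNorm_exponent_top]
  calc ∫⁻ x, (‖f x‖₊ : ℝ≥0∞) ∂(μcube d)
      ≤ ∫⁻ _, eLpNormEssSup f (μcube d) ∂(μcube d) :=
        lintegral_mono_ae (enorm_ae_le_eLpNormEssSup f (μcube d))
    _ = eLpNormEssSup f (μcube d) := by rw [lintegral_const, μcube_univ, mul_one]

lemma coeffOf_nnorm_le {d : ℕ} (f : (Fin d → ℝ) → ℂ) (n : Fin d → ℤ) :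
    (‖coeffOf f n‖₊ : ℝ≥0∞) ≤ eLpNorm f ⊤ (μcube d) := by
  rw [coeffOf_def]
  refine le_trans (enorm_integral_le_lintegral_enorm _) ?_
  refine le_trans (le_of_eq ?_) (lintegral_nnorm_le f)
  refine lintegral_congr fun x => ?_
  show ((‖f x * eChar d (-n) x‖₊ : ℝ≥0∞)) = ‖f x‖₊
  simp only [nnnorm_mul]
  rw [show ‖eChar d (-n) x‖₊ = 1 from by ext; exact norm_eChar d (-n) x, mul_one]

def GoodRep (d : ℕ) (f : (Fin d → ℝ) → ℂ) : Prop :=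
  ∀ n, Integrable (fun x => f x * eChar d (-n) x) (μcube d)

lemma aestronglyMeasurable_of_integrable_mul {d : ℕ} {f : (Fin d → ℝ) → ℂ} {n : Fin d → ℤ}
    (h : Integrable (fun x => f x * eChar d (-n) x) (μcube d)) :
    AEStronglyMeasurable f (μcube d) := by
  have : f = fun x => (f x * eChar d (-n) x) * eChar d n x := by
    funext x
    rw [mul_assoc, eChar_mul_neg, mul_one]
  rw [this]
  exact h.aestronglyMeasurable.mul (continuous_eChar d n).aestronglyMeasurable

lemma goodRep_of_meas {d : ℕ} {f : (Fin d → ℝ) → ℂ}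
    (hf : AEStronglyMeasurable f (μcube d)) (hb : eLpNorm f ⊤ (μcube d) ≠ ⊤) :
    GoodRep d f := by
  intro n
  refine ⟨hf.mul (continuous_eChar d (-n)).aestronglyMeasurable, ?_⟩
  rw [HasFiniteIntegral]
  calc ∫⁻ x, (‖f x * eChar d (-n) x‖₊ : ℝ≥0∞) ∂(μcube d)
      = ∫⁻ x, (‖f x‖₊ : ℝ≥0∞) ∂(μcube d) := by
        refine lintegral_congr fun x => ?_
        simp only [nnnorm_mul]
        rw [show ‖eChar d (-n) x‖₊ = 1 from by ext; exact norm_eChar d (-n) x, mul_one]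
    _ ≤ eLpNorm f ⊤ (μcube d) := lintegral_nnorm_le f
    _ < ⊤ := lt_top_iff_ne_top.2 hb

lemma goodRep_zero (d : ℕ) : GoodRep d (0 : (Fin d → ℝ) → ℂ) := by
  intro n
  simpa using integrable_zero (Fin d → ℝ) ℂ (μcube d)

lemma coeffOf_zero {d : ℕ} (n : Fin d → ℤ) : coeffOf (0 : (Fin d → ℝ) → ℂ) n = 0 := by
  rw [coeffOf_def]
  simp

lemma goodRep_or_coeff_zero {d : ℕ} (f : (Fin d → ℝ) → ℂ)
    (hb : eLpNorm f ⊤ (μcube d) ≠ ⊤) :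
    (AEStronglyMeasurable f (μcube d) ∧ GoodRep d f) ∨ ∀ n, coeffOf f n = 0 := by
  by_cases h : ∃ n, Integrable (fun x => f x * eChar d (-n) x) (μcube d)
  · obtain ⟨n, hn⟩ := h
    have hm := aestronglyMeasurable_of_integrable_mul hn
    exact Or.inl ⟨hm, goodRep_of_meas hm hb⟩
  · push_neg at h
    exact Or.inr fun n => by rw [coeffOf_def]; exact integral_undef (h n)

lemma coeffOf_add {d : ℕ} {f g : (Fin d → ℝ) → ℂ} (hf : GoodRep d f) (hg : GoodRep d g)
    (n : Fin d → ℤ) : coeffOf (f + g) n = coeffOf f n + coeffOf g n := by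
  rw [coeffOf_def, coeffOf_def, coeffOf_def, ← integral_add (hf n) (hg n)]
  refine integral_congr_ae (Eventually.of_forall fun x => ?_)
  simp [add_mul]

section Klem
variable {d : ℕ} {X : Type*} [NormedAddCommGroup X] [NormedSpace ℂ X]
  (jX : X →ₗ[ℂ] TorusCoeff d)

lemma KLX_le {t : ℝ} {c : TorusCoeff d} (p : ((Fin d → ℝ) → ℂ) × X)
    (hp : ∀ n, coeffOf p.1 n + jX p.2 n = c n) :
    KLX jX t c ≤ eLpNorm p.1 ⊤ (μcube d) + ENNReal.ofReal t * ENNReal.ofReal ‖p.2‖ :=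
  iInf_le _ (⟨p, hp⟩ : {p : ((Fin d → ℝ) → ℂ) × X // ∀ n, coeffOf p.1 n + jX p.2 n = c n})

lemma KLX_mono {s t : ℝ} (hst : s ≤ t) (c : TorusCoeff d) :
    KLX jX s c ≤ KLX jX t c := by
  refine le_iInf fun p => iInf_le_of_le p
    (add_le_add le_rfl (mul_le_mul_left (ENNReal.ofReal_le_ofReal hst) _))

lemma KLX_le_of_represents {t : ℝ} {c : TorusCoeff d} {g : (Fin d → ℝ) → ℂ}
    (hg : Represents g c) : KLX jX t c ≤ eLpNorm g ⊤ (μcube d) := by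
  have := KLX_le jX (t := t) (c := c) (g, 0) (fun n => by
    rw [map_zero]; simpa using hg n)
  simpa using this

lemma KLX_add_le (t : ℝ) (c : TorusCoeff d) (y : X) :
    KLX jX t (fun n => c n + jX y n) ≤ KLX jX t c + ENNReal.ofReal t * ENNReal.ofReal ‖y‖ := by
  conv_rhs => rw [KLX, ENNReal.iInf_add]
  refine le_iInf fun p => ?_
  refine le_trans (KLX_le jX (p.1.1, p.1.2 + y) fun n => ?_) ?_
  · rw [map_add]
    show coeffOf p.1.1 n + (jX p.1.2 n + jX y n) = c n + jX y n
    rw [← add_assoc, p.2 n]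
  · rw [add_assoc]
    gcongr
    calc ENNReal.ofReal t * ENNReal.ofReal ‖p.1.2 + y‖
        ≤ ENNReal.ofReal t * (ENNReal.ofReal ‖p.1.2‖ + ENNReal.ofReal ‖y‖) := by
          gcongr
          rw [← ENNReal.ofReal_add (norm_nonneg _) (norm_nonneg _)]
          exact ENNReal.ofReal_le_ofReal (norm_add_le _ _)
      _ = _ := by ring

end Klem


lemma sobW_pos {d : ℕ} (s : ℝ) (n : Fin d → ℤ) : 0 < sobW s n := by
  refine Real.rpow_pos_of_pos ?_ _
  have : (0:ℝ) ≤ ∑ j, ((n j : ℝ)) ^ 2 := Finset.sum_nonneg fun j _ => sq_nonneg _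
  linarith

lemma add_rpow_le_two_rpow (a b : ℝ≥0∞) {q : ℝ} (hq : 1 ≤ q) :
    (a + b) ^ q ≤ 2 ^ q * (a ^ q + b ^ q) := by
  have hq0 : (0:ℝ) ≤ q := by linarith
  calc (a + b) ^ q ≤ (2 * max a b) ^ q := by
        refine ENNReal.rpow_le_rpow ?_ hq0
        rw [two_mul]
        exact add_le_add (le_max_left _ _) (le_max_right _ _)
    _ = 2 ^ q * (max a b) ^ q := ENNReal.mul_rpow_of_nonneg _ _ hq0
    _ ≤ 2 ^ q * (a ^ q + b ^ q) := by
        gcongr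
        rcases max_cases a b with ⟨h, _⟩ | ⟨h, _⟩ <;> rw [h]
        · exact le_add_right le_rfl
        · exact le_add_left le_rfl

lemma rpow_one_div_le (b : ℝ≥0∞) {q : ℝ} (hq : 1 ≤ q) : b ^ (1 / q) ≤ 1 + b := by
  have hq0 : (0:ℝ) < q := lt_of_lt_of_le one_pos hq
  have h1q : 1 / q ≤ 1 := by rw [div_le_one hq0]; exact hq
  rcases le_total b 1 with hb | hb
  · exact le_trans (ENNReal.rpow_le_one hb (by positivity)) (le_add_right le_rfl)
  · refine le_trans ?_ (le_add_left le_rfl)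
    calc b ^ (1/q) ≤ b ^ (1:ℝ) := ENNReal.rpow_le_rpow_of_exponent_le hb h1q
      _ = b := ENNReal.rpow_one b

lemma rpow_rpow_inv (x : ℝ≥0∞) {q : ℝ} (hq0 : q ≠ 0) : (x ^ q) ^ (1/q) = x := by
  rw [← ENNReal.rpow_mul, mul_one_div, div_self hq0, ENNReal.rpow_one]

lemma rpow_inv_rpow (x : ℝ≥0∞) {q : ℝ} (hq0 : q ≠ 0) : (x ^ (1/q)) ^ q = x := by
  rw [← ENNReal.rpow_mul, one_div, inv_mul_cancel₀ hq0, ENNReal.rpow_one]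

lemma single_coeff_bound {d : ℕ} {s : ℝ} {c : TorusCoeff d} {A : ℝ≥0∞}
    (h : HsNorm s c ≤ A) (n : Fin d → ℤ) :
    (‖c n‖₊ : ℝ≥0∞) ≤ (ENNReal.ofReal (sobW s n))⁻¹ ^ ((1:ℝ)/2) * A := by
  have hw : 0 < sobW s n := sobW_pos s n
  have hw0 : ENNReal.ofReal (sobW s n) ≠ 0 := by
    simp [ENNReal.ofReal_eq_zero, not_le, hw]
  have hwt : ENNReal.ofReal (sobW s n) ≠ ⊤ := ENNReal.ofReal_ne_top
  set b : ℝ≥0∞ := (‖c n‖₊ : ℝ≥0∞) with hb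
  have h2 : ENNReal.ofReal (sobW s n) * b ^ 2 ≤ A ^ (2:ℝ) := by
    calc ENNReal.ofReal (sobW s n) * b ^ 2
        ≤ ∑' k : Fin d → ℤ, ENNReal.ofReal (sobW s k) * (‖c k‖₊ : ℝ≥0∞) ^ 2 :=
          ENNReal.le_tsum n
      _ = (HsNorm s c) ^ (2:ℝ) := by
          rw [HsNorm, ← ENNReal.rpow_mul]
          norm_num
      _ ≤ A ^ (2:ℝ) := ENNReal.rpow_le_rpow h (by norm_num)
  have h3 : b ^ (2:ℝ) ≤ (ENNReal.ofReal (sobW s n))⁻¹ * A ^ (2:ℝ) := by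
    have h5 := mul_le_mul_right h2 (ENNReal.ofReal (sobW s n))⁻¹
    rw [← mul_assoc, ENNReal.inv_mul_cancel hw0 hwt, one_mul] at h5
    rw [← ENNReal.rpow_natCast b 2] at h5
    exact_mod_cast h5
  have h4 := ENNReal.rpow_le_rpow h3 (by norm_num : (0:ℝ) ≤ 1/2)
  rw [← ENNReal.rpow_mul, ENNReal.mul_rpow_of_nonneg _ _ (by norm_num : (0:ℝ) ≤ 1/2),
    ← ENNReal.rpow_mul A] at h4
  norm_num at h4
  exact h4

lemma eq_zero_of_KLX_one_eq_zero {d : ℕ} {X : Type*} [NormedAddCommGroup X]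
    [NormedSpace ℂ X] (jX : X →ₗ[ℂ] TorusCoeff d) (m Cm : ℝ) (hCm : 0 ≤ Cm)
    (hembx : ∀ x : X, HsNorm (-m) (jX x) ≤ ENNReal.ofReal (Cm * ‖x‖))
    {c : TorusCoeff d} (h : KLX jX 1 c = 0) : c = 0 := by
  funext n
  set z : ℝ≥0∞ := (ENNReal.ofReal (sobW (-m) n))⁻¹ ^ ((1:ℝ)/2) with hz
  have hzt : z ≠ ⊤ := by
    refine ENNReal.rpow_ne_top_of_nonneg (by norm_num) ?_
    simp [ENNReal.inv_ne_top, ENNReal.ofReal_eq_zero, not_le, sobW_pos (-m) n]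
  set M : ℝ≥0∞ := 1 + z * ENNReal.ofReal Cm with hM
  have hMt : M ≠ ⊤ := by
    rw [hM]
    refine ENNReal.add_ne_top.2 ⟨ENNReal.one_ne_top, ENNReal.mul_ne_top hzt ENNReal.ofReal_ne_top⟩
  have key : ∀ p : {p : ((Fin d → ℝ) → ℂ) × X // ∀ k, coeffOf p.1 k + jX p.2 k = c k},
      (‖c n‖₊ : ℝ≥0∞) ≤ M *
        (eLpNorm p.1.1 ⊤ (μcube d) + ENNReal.ofReal 1 * ENNReal.ofReal ‖p.1.2‖) := by
    intro p
    have htri : (‖c n‖₊ : ℝ≥0∞) ≤ (‖coeffOf p.1.1 n‖₊ : ℝ≥0∞) + (‖jX p.1.2 n‖₊ : ℝ≥0∞) := by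
      rw [← p.2 n]
      exact_mod_cast nnnorm_add_le _ _
    have hbx : (‖jX p.1.2 n‖₊ : ℝ≥0∞) ≤ z * ENNReal.ofReal Cm * ENNReal.ofReal ‖p.1.2‖ := by
      refine le_trans (single_coeff_bound (hembx p.1.2) n) ?_
      rw [mul_assoc, ENNReal.ofReal_mul hCm]
    set E := eLpNorm p.1.1 ⊤ (μcube d)
    set O := ENNReal.ofReal ‖p.1.2‖
    calc (‖c n‖₊ : ℝ≥0∞) ≤ (‖coeffOf p.1.1 n‖₊ : ℝ≥0∞) + (‖jX p.1.2 n‖₊ : ℝ≥0∞) := htri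
      _ ≤ E + z * ENNReal.ofReal Cm * O := add_le_add (coeffOf_nnorm_le _ _) hbx
      _ ≤ (E + ENNReal.ofReal 1 * O) + z * ENNReal.ofReal Cm * (E + ENNReal.ofReal 1 * O) := by
          rw [ENNReal.ofReal_one, one_mul]
          exact add_le_add (le_add_right le_rfl)
            (mul_le_mul_right (le_add_left le_rfl) _)
      _ = M * (E + ENNReal.ofReal 1 * O) := by rw [hM, add_mul, one_mul]
  have hc0 : (‖c n‖₊ : ℝ≥0∞) = 0 := by
    refine le_antisymm ?_ zero_le
    refine ENNReal.le_of_forall_pos_le_add fun ε hε _ => ?_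
    rw [zero_add]
    have hδ : (0:ℝ≥0∞) < (ε : ℝ≥0∞) / M :=
      ENNReal.div_pos (by exact_mod_cast hε.ne') hMt
    have : KLX jX 1 c < (ε : ℝ≥0∞) / M := by rw [h]; exact hδ
    rw [KLX, iInf_lt_iff] at this
    obtain ⟨p, hp⟩ := this
    calc (‖c n‖₊ : ℝ≥0∞) ≤ M * _ := key p
      _ ≤ M * ((ε : ℝ≥0∞) / M) := mul_le_mul_right hp.le _
      _ ≤ (ε : ℝ≥0∞) := ENNReal.mul_div_le
  simpa using hc0

lemma KLX_one_le_four_interp {d : ℕ} {X : Type*} [NormedAddCommGroup X]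
    [NormedSpace ℂ X] (jX : X →ₗ[ℂ] TorusCoeff d) {θ q : ℝ}
    (hθ : θ ∈ Set.Ioo (0:ℝ) 1) (hq : 1 ≤ q) (c : TorusCoeff d) :
    KLX jX 1 c ≤ 4 * interpLX jX θ q c := by
  have hq0 : (0:ℝ) < q := lt_of_lt_of_le one_pos hq
  set K := KLX jX 1 c with hK
  have hpt : ∀ t ∈ Ioc (1:ℝ) 2,
      (2⁻¹ * K) ^ q / 2 ≤ (ENNReal.ofReal (t ^ (-θ)) * KLX jX t c) ^ q / ENNReal.ofReal t := by
    intro t ht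
    have ht1 : (1:ℝ) ≤ t := ht.1.le
    have ht0 : (0:ℝ) < t := lt_of_lt_of_le one_pos ht1
    have h2 : ENNReal.ofReal t ≤ 2 := by
      rw [show (2:ℝ≥0∞) = ENNReal.ofReal 2 by norm_num]
      exact ENNReal.ofReal_le_ofReal ht.2
    have ha : (2⁻¹ : ℝ≥0∞) ≤ ENNReal.ofReal (t ^ (-θ)) := by
      have h1 : t ^ θ ≤ 2 := by
        calc t ^ θ ≤ t ^ (1:ℝ) := Real.rpow_le_rpow_of_exponent_le ht1 hθ.2.le
          _ = t := Real.rpow_one t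
          _ ≤ 2 := ht.2
      have hinv : (2:ℝ)⁻¹ ≤ t ^ (-θ) := by
        rw [Real.rpow_neg ht0.le]
        have htp : (0:ℝ) < t ^ θ := Real.rpow_pos_of_pos ht0 θ
        exact inv_anti₀ htp h1
      have h21 : (2⁻¹ : ℝ≥0∞) = ENNReal.ofReal 2⁻¹ := by
        rw [ENNReal.ofReal_inv_of_pos (by norm_num : (0:ℝ) < 2)]
        norm_num
      rw [h21]
      exact ENNReal.ofReal_le_ofReal hinv
    have hKt : K ≤ KLX jX t c := KLX_mono jX ht1 c
    calc (2⁻¹ * K) ^ q / 2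
        ≤ (ENNReal.ofReal (t ^ (-θ)) * KLX jX t c) ^ q / 2 :=
          ENNReal.div_le_div_right
            (ENNReal.rpow_le_rpow (mul_le_mul' ha hKt) hq0.le) 2
      _ ≤ (ENNReal.ofReal (t ^ (-θ)) * KLX jX t c) ^ q / ENNReal.ofReal t :=
          ENNReal.div_le_div_left h2 _
  have hIq : (2⁻¹ * K) ^ q / 2 ≤ (interpLX jX θ q c) ^ q := by
    rw [interpLX, rpow_inv_rpow _ hq0.ne']
    calc (2⁻¹ * K) ^ q / 2
        = ((2⁻¹ * K) ^ q / 2) * volume (Ioc (1:ℝ) 2) := by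
          rw [Real.volume_Ioc]
          norm_num
      _ = ∫⁻ _ in Ioc (1:ℝ) 2, (2⁻¹ * K) ^ q / 2 := (setLIntegral_const _ _).symm
      _ ≤ ∫⁻ t in Ioc (1:ℝ) 2,
            (ENNReal.ofReal (t ^ (-θ)) * KLX jX t c) ^ q / ENNReal.ofReal t := by
          refine lintegral_mono_ae ((ae_restrict_iff' measurableSet_Ioc).2 ?_)
          exact ae_of_all _ hpt
      _ ≤ ∫⁻ t in Ioi (0:ℝ),
            (ENNReal.ofReal (t ^ (-θ)) * KLX jX t c) ^ q / ENNReal.ofReal t := by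
          refine lintegral_mono_set fun t ht => ?_
          exact lt_of_lt_of_le one_pos ht.1.le
  have hfin : ((2⁻¹ * K) ^ q / 2) ^ (1/q) ≤ interpLX jX θ q c := by
    calc ((2⁻¹ * K) ^ q / 2) ^ (1/q)
        ≤ ((interpLX jX θ q c) ^ q) ^ (1/q) := ENNReal.rpow_le_rpow hIq (by positivity)
      _ = interpLX jX θ q c := rpow_rpow_inv _ hq0.ne'
  have hlhs : 4⁻¹ * K ≤ ((2⁻¹ * K) ^ q / 2) ^ (1/q) := by
    rw [ENNReal.div_rpow_of_nonneg _ _ (by positivity : (0:ℝ) ≤ 1/q),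
      rpow_rpow_inv _ hq0.ne']
    rw [ENNReal.div_eq_inv_mul]
    have h2q : (2:ℝ≥0∞)⁻¹ ≤ ((2:ℝ≥0∞) ^ (1/q))⁻¹ := by
      refine ENNReal.inv_le_inv.2 ?_
      calc (2:ℝ≥0∞) ^ (1/q) ≤ 2 ^ (1:ℝ) := by
            refine ENNReal.rpow_le_rpow_of_exponent_le (by norm_num) ?_
            rw [div_le_one hq0]; exact hq
        _ = 2 := ENNReal.rpow_one 2
    have h22 : (2:ℝ≥0∞)⁻¹ * 2⁻¹ = 4⁻¹ := by
      rw [← ENNReal.mul_inv (Or.inl (by norm_num)) (Or.inl (by norm_num))]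
      norm_num
    calc 4⁻¹ * K = 2⁻¹ * (2⁻¹ * K) := by rw [← mul_assoc, h22]
      _ ≤ (2 ^ (1/q))⁻¹ * (2⁻¹ * K) := mul_le_mul_left h2q _
  have h4 : 4⁻¹ * K ≤ interpLX jX θ q c := le_trans hlhs hfin
  calc K = 4 * (4⁻¹ * K) := by
        rw [← mul_assoc, ENNReal.mul_inv_cancel (by norm_num) (by norm_num), one_mul]
    _ ≤ 4 * interpLX jX θ q c := mul_le_mul_right h4 _


lemma lintegral_J0 {θ : ℝ} (hθ0 : 0 < θ) (hθ1 : θ < 1) :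
    ∫⁻ t in Ioc (0:ℝ) 1, ENNReal.ofReal (t ^ (-θ)) = ENNReal.ofReal (1/(1-θ)) := by
  have hint : IntegrableOn (fun t : ℝ => t ^ (-θ)) (Ioc 0 1) volume :=
    (intervalIntegrable_iff_integrableOn_Ioc_of_le zero_le_one).1
      (intervalIntegral.intervalIntegrable_rpow' (by linarith))
  have hnn : 0 ≤ᵐ[volume.restrict (Ioc (0:ℝ) 1)] fun t : ℝ => t ^ (-θ) := by
    filter_upwards [ae_restrict_mem measurableSet_Ioc] with t ht
    exact Real.rpow_nonneg ht.1.le _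
  rw [← ofReal_integral_eq_lintegral_ofReal hint hnn]
  congr 1
  rw [← intervalIntegral.integral_of_le zero_le_one,
    integral_rpow (Or.inl (by linarith : (-1:ℝ) < -θ))]
  rw [Real.one_rpow, Real.zero_rpow (by linarith : -θ + 1 ≠ 0)]
  field_simp
  ring

lemma lintegral_J1 {θ : ℝ} (hθ0 : 0 < θ) :
    ∫⁻ t in Ioi (1:ℝ), ENNReal.ofReal (t ^ (-θ-1)) = ENNReal.ofReal (1/θ) := by
  have hint : IntegrableOn (fun t : ℝ => t ^ (-θ-1)) (Ioi 1) volume :=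
    integrableOn_Ioi_rpow_of_lt (by linarith) one_pos
  have hnn : 0 ≤ᵐ[volume.restrict (Ioi (1:ℝ))] fun t : ℝ => t ^ (-θ-1) := by
    filter_upwards [ae_restrict_mem measurableSet_Ioi] with t ht
    exact Real.rpow_nonneg (le_trans zero_le_one ht.le) _
  rw [← ofReal_integral_eq_lintegral_ofReal hint hnn]
  congr 1
  rw [integral_Ioi_rpow_of_lt (by linarith : -θ-1 < -1) one_pos]
  rw [Real.one_rpow]
  rw [show -θ - 1 + 1 = -θ by ring]
  field_simp

lemma interp_le_of_bounds {d : ℕ} {X : Type*} [NormedAddCommGroup X]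
    [NormedSpace ℂ X] (jX : X →ₗ[ℂ] TorusCoeff d) {θ q : ℝ}
    (hθ : θ ∈ Set.Ioo (0:ℝ) 1) (hq : 1 ≤ q)
    {c v : TorusCoeff d} {y : X} {B : ℝ≥0∞}
    (hc : ∀ n, c n = v n + jX y n)
    (hB : ∀ t : ℝ, KLX jX t c ≤ B) :
    interpLX jX θ q c ≤ 2 * interpLX jX θ q v
      + 2 * (1 + ENNReal.ofReal (1/(1-θ))) * ENNReal.ofReal ‖y‖
      + (1 + ENNReal.ofReal (1/θ)) * B := by
  obtain ⟨hθ0, hθ1⟩ := hθ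
  have hq0 : (0:ℝ) < q := lt_of_lt_of_le one_pos hq
  set oY := ENNReal.ofReal ‖y‖ with hoY
  set Φc : ℝ → ℝ≥0∞ := fun t =>
    (ENNReal.ofReal (t ^ (-θ)) * KLX jX t c) ^ q / ENNReal.ofReal t with hΦc
  set Φv : ℝ → ℝ≥0∞ := fun t =>
    (ENNReal.ofReal (t ^ (-θ)) * KLX jX t v) ^ q / ENNReal.ofReal t with hΦv
  have hceq : c = fun n => v n + jX y n := funext hc
  have hKle : ∀ t : ℝ, KLX jX t c ≤ KLX jX t v + ENNReal.ofReal t * oY := by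
    intro t
    rw [hceq]
    exact KLX_add_le jX t v y
  -- region 1 pointwise bound
  have hreg1 : ∀ t ∈ Ioc (0:ℝ) 1,
      Φc t ≤ 2 ^ q * Φv t + (2 ^ q * oY ^ q) * ENNReal.ofReal (t ^ (-θ)) := by
    intro t ht
    have ht0 : (0:ℝ) < t := ht.1
    have hoT0 : ENNReal.ofReal t ≠ 0 := (ENNReal.ofReal_pos.2 ht0).ne'
    have hoTt : ENNReal.ofReal t ≠ ⊤ := ENNReal.ofReal_ne_top
    set a := ENNReal.ofReal (t ^ (-θ)) with ha
    set oT := ENNReal.ofReal t with hoT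
    have hstep : a * KLX jX t c ≤ a * KLX jX t v + (a * oT) * oY := by
      calc a * KLX jX t c ≤ a * (KLX jX t v + oT * oY) :=
            mul_le_mul_right (hKle t) a
        _ = a * KLX jX t v + (a * oT) * oY := by ring
    have hpow : (a * KLX jX t c) ^ q
        ≤ 2 ^ q * ((a * KLX jX t v) ^ q + ((a * oT) * oY) ^ q) :=
      le_trans (ENNReal.rpow_le_rpow hstep hq0.le) (add_rpow_le_two_rpow _ _ hq)
    have haT : a * oT = ENNReal.ofReal (t ^ (1-θ)) := by
      rw [ha, hoT, ← ENNReal.ofReal_mul (Real.rpow_nonneg ht0.le _)]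
      congr 1
      rw [show (1-θ) = -θ + 1 by ring, Real.rpow_add ht0, Real.rpow_one]
    have hofq : (ENNReal.ofReal (t ^ (1-θ))) ^ q = ENNReal.ofReal (t ^ ((1-θ)*q)) := by
      rw [ENNReal.ofReal_rpow_of_pos (Real.rpow_pos_of_pos ht0 _), ← Real.rpow_mul ht0.le]
    have hexp : ENNReal.ofReal (t ^ ((1-θ)*q)) ≤ a * oT := by
      rw [haT]
      exact ENNReal.ofReal_le_ofReal
        (Real.rpow_le_rpow_of_exponent_ge ht0 ht.2 (by nlinarith))
    have hA2 : ((a * oT) * oY) ^ q / oT ≤ oY ^ q * a := by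
      calc ((a * oT) * oY) ^ q / oT
          = ENNReal.ofReal (t ^ ((1-θ)*q)) * oY ^ q / oT := by
            rw [haT, ENNReal.mul_rpow_of_nonneg _ _ hq0.le, hofq]
        _ ≤ ((a * oT) * oY ^ q) / oT := by gcongr
        _ = ((oY ^ q * a) * oT) / oT := by rw [mul_right_comm, mul_comm a]
        _ = (oY ^ q * a) * (oT / oT) := by rw [mul_div_assoc]
        _ ≤ (oY ^ q * a) * 1 := mul_le_mul_right ENNReal.div_self_le_one _
        _ = oY ^ q * a := mul_one _
    calc Φc t = (a * KLX jX t c) ^ q / oT := rfl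
      _ ≤ (2 ^ q * ((a * KLX jX t v) ^ q + ((a * oT) * oY) ^ q)) / oT :=
          ENNReal.div_le_div_right hpow _
      _ = 2 ^ q * ((a * KLX jX t v) ^ q / oT) + 2 ^ q * (((a * oT) * oY) ^ q / oT) := by
          rw [mul_add, ENNReal.add_div, mul_div_assoc, mul_div_assoc]
      _ ≤ 2 ^ q * Φv t + 2 ^ q * (oY ^ q * a) :=
          add_le_add le_rfl (mul_le_mul_right hA2 _)
      _ = 2 ^ q * Φv t + (2 ^ q * oY ^ q) * ENNReal.ofReal (t ^ (-θ)) := by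
          rw [ha, mul_assoc]
  -- region 2 pointwise bound
  have hreg2 : ∀ t ∈ Ioi (1:ℝ), Φc t ≤ B ^ q * ENNReal.ofReal (t ^ (-θ-1)) := by
    intro t ht
    have ht1 : (1:ℝ) ≤ t := le_of_lt ht
    have ht0 : (0:ℝ) < t := lt_of_lt_of_le one_pos ht1
    set a := ENNReal.ofReal (t ^ (-θ)) with ha
    set oT := ENNReal.ofReal t with hoT
    have hofq : a ^ q = ENNReal.ofReal (t ^ (-θ*q)) := by
      rw [ha, ENNReal.ofReal_rpow_of_pos (Real.rpow_pos_of_pos ht0 _),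
        ← Real.rpow_mul ht0.le]
    have hexp : ENNReal.ofReal (t ^ (-θ*q)) ≤ ENNReal.ofReal (t ^ (-θ-1)) * oT := by
      rw [hoT, ← ENNReal.ofReal_mul (Real.rpow_nonneg ht0.le _)]
      refine ENNReal.ofReal_le_ofReal ?_
      have h5 : t ^ (-θ-1) * t ^ (1:ℝ) = t ^ (-θ) := by
        rw [← Real.rpow_add ht0]
        norm_num
      rw [Real.rpow_one] at h5
      calc t ^ (-θ*q) ≤ t ^ (-θ) := Real.rpow_le_rpow_of_exponent_le ht1 (by nlinarith)
        _ = t ^ (-θ-1) * t := h5.symm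
    calc Φc t = (a * KLX jX t c) ^ q / oT := rfl
      _ ≤ (a * B) ^ q / oT :=
          ENNReal.div_le_div_right
            (ENNReal.rpow_le_rpow (mul_le_mul_right (hB t) a) hq0.le) _
      _ = a ^ q * B ^ q / oT := by rw [ENNReal.mul_rpow_of_nonneg _ _ hq0.le]
      _ ≤ (ENNReal.ofReal (t ^ (-θ-1)) * oT) * B ^ q / oT := by
          rw [hofq]
          gcongr
      _ = (B ^ q * ENNReal.ofReal (t ^ (-θ-1))) * (oT / oT) := by
          rw [mul_right_comm, mul_div_assoc, mul_comm (ENNReal.ofReal (t ^ (-θ-1)))]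
      _ ≤ (B ^ q * ENNReal.ofReal (t ^ (-θ-1))) * 1 :=
          mul_le_mul_right ENNReal.div_self_le_one _
      _ = B ^ q * ENNReal.ofReal (t ^ (-θ-1)) := mul_one _
  -- integrate
  have hsplit : (∫⁻ t in Ioi (0:ℝ), Φc t)
      = (∫⁻ t in Ioc (0:ℝ) 1, Φc t) + ∫⁻ t in Ioi (1:ℝ), Φc t := by
    rw [← Set.Ioc_union_Ioi_eq_Ioi zero_le_one,
      lintegral_union measurableSet_Ioi (Set.Ioc_disjoint_Ioi le_rfl)]
  have hint1 : (∫⁻ t in Ioc (0:ℝ) 1, Φc t)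
      ≤ 2 ^ q * (interpLX jX θ q v) ^ q
        + (2 ^ q * oY ^ q) * ENNReal.ofReal (1/(1-θ)) := by
    calc (∫⁻ t in Ioc (0:ℝ) 1, Φc t)
        ≤ ∫⁻ t in Ioc (0:ℝ) 1,
            (2 ^ q * Φv t + (2 ^ q * oY ^ q) * ENNReal.ofReal (t ^ (-θ))) := by
          refine lintegral_mono_ae ((ae_restrict_iff' measurableSet_Ioc).2 ?_)
          exact ae_of_all _ hreg1
      _ = (∫⁻ t in Ioc (0:ℝ) 1, 2 ^ q * Φv t)
          + ∫⁻ t in Ioc (0:ℝ) 1, (2 ^ q * oY ^ q) * ENNReal.ofReal (t ^ (-θ)) := by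
          refine lintegral_add_right _ ?_
          exact ((measurable_id.pow_const _).ennreal_ofReal).const_mul _
      _ ≤ 2 ^ q * (interpLX jX θ q v) ^ q
          + (2 ^ q * oY ^ q) * ENNReal.ofReal (1/(1-θ)) := by
          refine add_le_add ?_ ?_
          · rw [lintegral_const_mul' _ _ (by simp : (2:ℝ≥0∞) ^ q ≠ ⊤)]
            refine mul_le_mul_right ?_ _
            rw [interpLX, rpow_inv_rpow _ hq0.ne']
            refine lintegral_mono_set fun t ht => ht.1
          · rw [lintegral_const_mul' _ _
              (ENNReal.mul_ne_top (by simp) (ENNReal.rpow_ne_top_of_nonneg hq0.le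
                (by rw [hoY]; exact ENNReal.ofReal_ne_top))),
              lintegral_J0 hθ0 hθ1]
  have hint2 : (∫⁻ t in Ioi (1:ℝ), Φc t) ≤ B ^ q * ENNReal.ofReal (1/θ) := by
    calc (∫⁻ t in Ioi (1:ℝ), Φc t)
        ≤ ∫⁻ t in Ioi (1:ℝ), B ^ q * ENNReal.ofReal (t ^ (-θ-1)) := by
          refine lintegral_mono_ae ((ae_restrict_iff' measurableSet_Ioi).2 ?_)
          exact ae_of_all _ hreg2
      _ = B ^ q * ∫⁻ t in Ioi (1:ℝ), ENNReal.ofReal (t ^ (-θ-1)) := by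
          have hmeas : Measurable fun t : ℝ => ENNReal.ofReal (t ^ (-θ-1)) :=
            (measurable_id.pow_const _).ennreal_ofReal
          exact lintegral_const_mul'' _ hmeas.aemeasurable
      _ = B ^ q * ENNReal.ofReal (1/θ) := by rw [lintegral_J1 hθ0]
  have htot : (∫⁻ t in Ioi (0:ℝ), Φc t)
      ≤ 2 ^ q * (interpLX jX θ q v) ^ q
        + (2 ^ q * oY ^ q) * ENNReal.ofReal (1/(1-θ))
        + B ^ q * ENNReal.ofReal (1/θ) := by
    rw [hsplit]
    exact add_le_add hint1 hint2
  -- take q-th roots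
  have h1q0 : (0:ℝ) ≤ 1/q := by positivity
  have h1q1 : 1/q ≤ 1 := by rw [div_le_one hq0]; exact hq
  calc interpLX jX θ q c = (∫⁻ t in Ioi (0:ℝ), Φc t) ^ (1/q) := rfl
    _ ≤ (2 ^ q * (interpLX jX θ q v) ^ q
        + (2 ^ q * oY ^ q) * ENNReal.ofReal (1/(1-θ))
        + B ^ q * ENNReal.ofReal (1/θ)) ^ (1/q) := ENNReal.rpow_le_rpow htot h1q0
    _ ≤ (2 ^ q * (interpLX jX θ q v) ^ q
        + (2 ^ q * oY ^ q) * ENNReal.ofReal (1/(1-θ))) ^ (1/q)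
        + (B ^ q * ENNReal.ofReal (1/θ)) ^ (1/q) :=
          ENNReal.rpow_add_le_add_rpow _ _ h1q0 h1q1
    _ ≤ (2 ^ q * (interpLX jX θ q v) ^ q) ^ (1/q)
        + ((2 ^ q * oY ^ q) * ENNReal.ofReal (1/(1-θ))) ^ (1/q)
        + (B ^ q * ENNReal.ofReal (1/θ)) ^ (1/q) :=
          add_le_add_left (ENNReal.rpow_add_le_add_rpow _ _ h1q0 h1q1) _
    _ ≤ 2 * interpLX jX θ q v
        + 2 * (1 + ENNReal.ofReal (1/(1-θ))) * oY
        + (1 + ENNReal.ofReal (1/θ)) * B := by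
      refine add_le_add (add_le_add ?_ ?_) ?_
      · rw [ENNReal.mul_rpow_of_nonneg _ _ h1q0, rpow_rpow_inv _ hq0.ne',
          rpow_rpow_inv _ hq0.ne']
      · rw [ENNReal.mul_rpow_of_nonneg _ _ h1q0,
          ENNReal.mul_rpow_of_nonneg _ _ h1q0, rpow_rpow_inv _ hq0.ne',
          rpow_rpow_inv _ hq0.ne']
        calc 2 * oY * (ENNReal.ofReal (1/(1-θ))) ^ (1/q)
            ≤ 2 * oY * (1 + ENNReal.ofReal (1/(1-θ))) :=
              mul_le_mul_right (rpow_one_div_le _ hq) _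
          _ = 2 * (1 + ENNReal.ofReal (1/(1-θ))) * oY := by ring
      · rw [ENNReal.mul_rpow_of_nonneg _ _ h1q0, rpow_rpow_inv _ hq0.ne']
        calc B * (ENNReal.ofReal (1/θ)) ^ (1/q)
            ≤ B * (1 + ENNReal.ofReal (1/θ)) := mul_le_mul_right (rpow_one_div_le _ hq) _
          _ = (1 + ENNReal.ofReal (1/θ)) * B := mul_comm _ _

lemma exists_good_decomposition {d : ℕ} {X : Type*} [NormedAddCommGroup X]
    [NormedSpace ℂ X] (jX : X →ₗ[ℂ] TorusCoeff d) (m Cm : ℝ) (hCm : 0 ≤ Cm)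
    (hembx : ∀ x : X, HsNorm (-m) (jX x) ≤ ENNReal.ofReal (Cm * ‖x‖))
    {θ q : ℝ} (hθ : θ ∈ Set.Ioo (0:ℝ) 1) (hq : 1 ≤ q)
    (c : TorusCoeff d) (hc : interpLX jX θ q c ≠ ⊤) :
    ∃ (f : (Fin d → ℝ) → ℂ) (x : X),
      AEStronglyMeasurable f (μcube d) ∧ GoodRep d f ∧
      (∀ n, coeffOf f n + jX x n = c n) ∧
      eLpNorm f ⊤ (μcube d) + ENNReal.ofReal ‖x‖ ≤ 8 * interpLX jX θ q c := by
  have hK4 : KLX jX 1 c ≤ 4 * interpLX jX θ q c := KLX_one_le_four_interp jX hθ hq c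
  rcases eq_or_ne (KLX jX 1 c) 0 with hK0 | hKpos
  · have hc0 : c = 0 := eq_zero_of_KLX_one_eq_zero jX m Cm hCm hembx hK0
    refine ⟨0, 0, ?_, goodRep_zero d, fun n => ?_, ?_⟩
    · exact aestronglyMeasurable_const
    · rw [coeffOf_zero, map_zero, hc0]
      simp
    · simp [eLpNorm_zero]
  · have h8t : (8:ℝ≥0∞) * interpLX jX θ q c ≠ ⊤ := ENNReal.mul_ne_top (by norm_num) hc
    have hKt : KLX jX 1 c ≠ ⊤ :=
      ne_top_of_le_ne_top (ENNReal.mul_ne_top (by norm_num) hc) hK4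
    have hlt : KLX jX 1 c < 2 * KLX jX 1 c := by
      have h := ENNReal.lt_add_right hKt hKpos
      rwa [← two_mul] at h
    obtain ⟨p, hp⟩ := iInf_lt_iff.mp hlt
    have hcost : eLpNorm p.1.1 ⊤ (μcube d) + ENNReal.ofReal ‖p.1.2‖
        ≤ 8 * interpLX jX θ q c := by
      have h1 : eLpNorm p.1.1 ⊤ (μcube d) + ENNReal.ofReal 1 * ENNReal.ofReal ‖p.1.2‖
          ≤ 2 * KLX jX 1 c := hp.le
      rw [ENNReal.ofReal_one, one_mul] at h1
      refine le_trans h1 ?_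
      calc 2 * KLX jX 1 c ≤ 2 * (4 * interpLX jX θ q c) := mul_le_mul_right hK4 2
        _ = 8 * interpLX jX θ q c := by rw [← mul_assoc]; norm_num
    have hft : eLpNorm p.1.1 ⊤ (μcube d) ≠ ⊤ :=
      ne_top_of_le_ne_top h8t (le_trans le_self_add hcost)
    rcases goodRep_or_coeff_zero p.1.1 hft with ⟨hmeas, hgood⟩ | hzero
    · exact ⟨p.1.1, p.1.2, hmeas, hgood, p.2, hcost⟩
    · refine ⟨0, p.1.2, aestronglyMeasurable_const, goodRep_zero d, fun n => ?_, ?_⟩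
      · rw [coeffOf_zero, zero_add]
        have h2 := p.2 n
        rw [hzero n, zero_add] at h2
        exact h2
      · rw [eLpNorm_zero, zero_add]
        exact le_trans (le_trans le_add_self hcost) le_rfl

/-- If `X` is a Bourgain–Brezis space on `𝕋^d` such that `(L^∞,X)` is an interpolation
couple, `L^∞ ∩ X` has a separable predual, and `X ↪ H^{-m}` for some `m > d/2`, then
every real interpolation space `X_{θ,q} = (L^∞,X)_{θ,q}` is a Bourgain–Brezis space. -/
theorem BB_interpolation_on_torus
    (d : ℕ) (hd : 2 ≤ d)
    {X : Type*} [NormedAddCommGroup X] [NormedSpace ℂ X] [CompleteSpace X]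
    (jX : X →ₗ[ℂ] TorusCoeff d) (hjX : Function.Injective jX)
    -- `X ↪ H^{-m}` for some `m > d/2`:
    (m : ℝ) (hm : (d : ℝ) / 2 < m)
    (hemb : ∃ C : ℝ, 0 < C ∧ ∀ x : X, HsNorm (-m) (jX x) ≤ ENNReal.ofReal (C * ‖x‖))
    -- `L^∞ ∩ X` has a separable predual, where the intersection is realized as a
    -- submodule of `L^∞(𝕋^d) × X` (with the max norm):
    (W : Submodule ℂ ((Lp ℂ ⊤ (μcube d)) × X))
    (hW : ∀ p : (Lp ℂ ⊤ (μcube d)) × X, p ∈ W ↔ Represents (⇑p.1) (jX p.2))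
    {P : Type*} [NormedAddCommGroup P] [NormedSpace ℂ P] [TopologicalSpace.SeparableSpace P]
    (hpre : Nonempty (↥W ≃ₗᵢ[ℂ] StrongDual ℂ P))
    -- `X` is a Bourgain–Brezis space:
    (hBB : ∃ C : ℝ, 0 < C ∧ ∀ v : Fin d → X,
      ∃ (u : Fin d → X) (g : Fin d → ((Fin d → ℝ) → ℂ)),
        (∀ j, Represents (g j) (jX (u j))) ∧
        divC (fun j => jX (u j)) = divC (fun j => jX (v j)) ∧
        ∀ j, eLpNorm (g j) ⊤ (μcube d) ≤ ENNReal.ofReal (C * ∑ i, ‖v i‖) ∧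
          ‖u j‖ ≤ C * ∑ i, ‖v i‖)
    (θ q : ℝ) (hθ : θ ∈ Set.Ioo (0:ℝ) 1) (hq : 1 ≤ q) :
    -- conclusion: `X_{θ,q} = (L^∞,X)_{θ,q}` is a Bourgain–Brezis space
    ∃ C : ℝ, 0 < C ∧ ∀ v : Fin d → TorusCoeff d,
      (∀ j, interpLX jX θ q (v j) ≠ ⊤) →
      ∃ (u : Fin d → TorusCoeff d) (g : Fin d → ((Fin d → ℝ) → ℂ)),
        (∀ j, Represents (g j) (u j)) ∧
        divC u = divC v ∧
        ∀ j, eLpNorm (g j) ⊤ (μcube d) ≤ ENNReal.ofReal C * ∑ i, interpLX jX θ q (v i) ∧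
          interpLX jX θ q (u j) ≤ ENNReal.ofReal C * ∑ i, interpLX jX θ q (v i) := by
  obtain ⟨Cm, hCm, hembx⟩ := hemb
  obtain ⟨CB, hCB, hBBf⟩ := hBB
  have hθ0 := hθ.1
  have hθ1 := hθ.2
  set c0 : ℝ := 1/(1-θ) with hc0def
  set c1 : ℝ := 1/θ with hc1def
  have hc0 : 0 ≤ c0 := by
    rw [hc0def]
    exact div_nonneg zero_le_one (by linarith)
  have hc1 : 0 ≤ c1 := by
    rw [hc1def]
    exact div_nonneg zero_le_one (by linarith)
  have hd0 : (0:ℝ) ≤ (d:ℝ) := Nat.cast_nonneg d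
  have hCBd : 0 ≤ 8*CB*(d:ℝ) := mul_nonneg (mul_nonneg (by norm_num) hCB.le) hd0
  set C : ℝ := 2 + 2*(1+c0)*(8*CB*(d:ℝ)+8) + (1+c1)*(8+8*CB*(d:ℝ)) + 8 with hCdef
  have hC1 : (0:ℝ) ≤ 2*(1+c0)*(8*CB*(d:ℝ)+8) :=
    mul_nonneg (by linarith) (by linarith)
  have hC2 : (0:ℝ) ≤ (1+c1)*(8+8*CB*(d:ℝ)) :=
    mul_nonneg (by linarith) (by linarith)
  have hCpos : 0 < C := by rw [hCdef]; linarith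
  refine ⟨C, hCpos, fun v hv => ?_⟩
  set S := ∑ i, interpLX jX θ q (v i) with hS
  have hSt : S ≠ ⊤ := by
    rw [hS]
    exact (ENNReal.sum_lt_top.mpr fun i _ => lt_top_iff_ne_top.2 (hv i)).ne
  set s : ℝ := S.toReal with hsdef
  have hs0 : 0 ≤ s := ENNReal.toReal_nonneg
  have hSofs : ENNReal.ofReal s = S := ENNReal.ofReal_toReal hSt
  have hIvS : ∀ j, interpLX jX θ q (v j) ≤ S := fun j =>
    Finset.single_le_sum (f := fun i => interpLX jX θ q (v i))
      (fun i _ => zero_le) (Finset.mem_univ j)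
  -- decompose each v j
  choose f x hmeas hgood hdec hcost using fun j =>
    exists_good_decomposition jX m Cm hCm.le hembx hθ hq (v j) (hv j)
  have h8S : (8:ℝ≥0∞) * S = ENNReal.ofReal (8*s) := by
    rw [ENNReal.ofReal_mul (by norm_num : (0:ℝ) ≤ 8), hSofs]
    norm_num
  have hcostS : ∀ j, eLpNorm (f j) ⊤ (μcube d) + ENNReal.ofReal ‖x j‖
      ≤ ENNReal.ofReal (8*s) := fun j => by
    rw [← h8S]
    exact le_trans (hcost j) (mul_le_mul_right (hIvS j) 8)
  have hfS : ∀ j, eLpNorm (f j) ⊤ (μcube d) ≤ ENNReal.ofReal (8*s) := fun j =>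
    le_trans le_self_add (hcostS j)
  have hxj : ∀ j, ‖x j‖ ≤ 8*s := by
    intro j
    have h1 : ENNReal.ofReal ‖x j‖ ≤ ENNReal.ofReal (8*s) :=
      le_trans le_add_self (hcostS j)
    exact (ENNReal.ofReal_le_ofReal_iff (by linarith)).1 h1
  have hsum_x : ∑ i, ‖x i‖ ≤ (d:ℝ) * (8*s) := by
    calc ∑ i, ‖x i‖ ≤ ∑ _i : Fin d, 8*s := Finset.sum_le_sum fun i _ => hxj i
      _ = (d:ℝ) * (8*s) := by
        rw [Finset.sum_const, Finset.card_univ, Fintype.card_fin, nsmul_eq_mul]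
  have hRS : CB * ∑ i, ‖x i‖ ≤ 8*CB*(d:ℝ)*s := by
    calc CB * ∑ i, ‖x i‖ ≤ CB * ((d:ℝ)*(8*s)) := mul_le_mul_of_nonneg_left hsum_x hCB.le
      _ = 8*CB*(d:ℝ)*s := by ring
  -- apply the Bourgain-Brezis property of X
  obtain ⟨u', g', hrep', hdiv', hbnd'⟩ := hBBf x
  have hu'j : ∀ j, ‖u' j‖ ≤ 8*CB*(d:ℝ)*s := fun j => le_trans (hbnd' j).2 hRS
  -- normalize the representatives g'
  have hg'norm : ∀ j, ∃ h : (Fin d → ℝ) → ℂ,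
      AEStronglyMeasurable h (μcube d) ∧ GoodRep d h ∧ Represents h (jX (u' j)) ∧
      eLpNorm h ⊤ (μcube d) ≤ ENNReal.ofReal (8*CB*(d:ℝ)*s) := by
    intro j
    have hb : eLpNorm (g' j) ⊤ (μcube d) ≤ ENNReal.ofReal (8*CB*(d:ℝ)*s) :=
      le_trans (hbnd' j).1 (ENNReal.ofReal_le_ofReal hRS)
    have hbt : eLpNorm (g' j) ⊤ (μcube d) ≠ ⊤ :=
      ne_top_of_le_ne_top ENNReal.ofReal_ne_top hb
    rcases goodRep_or_coeff_zero (g' j) hbt with ⟨hm, hg⟩ | hz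
    · exact ⟨g' j, hm, hg, hrep' j, hb⟩
    · refine ⟨0, aestronglyMeasurable_const, goodRep_zero d, fun n => ?_, ?_⟩
      · rw [coeffOf_zero]
        exact ((hrep' j n).symm.trans (hz n)).symm
      · rw [eLpNorm_zero]
        exact zero_le
  choose g'' hm'' hg'' hrep'' hbnd'' using hg'norm
  -- the candidate vector field and its representatives
  set u : Fin d → TorusCoeff d := fun j n => coeffOf (f j) n + jX (u' j) n with hu
  set g : Fin d → ((Fin d → ℝ) → ℂ) := fun j => f j + g'' j with hg
  have hurep : ∀ j, Represents (g j) (u j) := by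
    intro j n
    rw [hg]
    show coeffOf (f j + g'' j) n = u j n
    rw [coeffOf_add (hgood j) (hg'' j) n, hrep'' j n]
  -- L^∞ bound on g
  have hgS : ∀ j, eLpNorm (g j) ⊤ (μcube d)
      ≤ ENNReal.ofReal (8 + 8*CB*(d:ℝ)) * S := by
    intro j
    calc eLpNorm (g j) ⊤ (μcube d)
        ≤ eLpNorm (f j) ⊤ (μcube d) + eLpNorm (g'' j) ⊤ (μcube d) :=
          eLpNorm_add_le (hmeas j) (hm'' j) le_top
      _ ≤ ENNReal.ofReal (8*s) + ENNReal.ofReal (8*CB*(d:ℝ)*s) :=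
          add_le_add (hfS j) (hbnd'' j)
      _ = ENNReal.ofReal (8 + 8*CB*(d:ℝ)) * ENNReal.ofReal s := by
        rw [← ENNReal.ofReal_add (by linarith) (mul_nonneg hCBd hs0),
          ← ENNReal.ofReal_mul (by linarith)]
        congr 1
        ring
      _ = ENNReal.ofReal (8 + 8*CB*(d:ℝ)) * S := by rw [hSofs]
  -- interpolation norm bound on u
  have huS : ∀ j, interpLX jX θ q (u j) ≤ ENNReal.ofReal (C - 8) * S := by
    intro j
    have hcj : ∀ n, u j n = v j n + jX (u' j - x j) n := by
      intro n
      rw [map_sub]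
      show coeffOf (f j) n + jX (u' j) n = v j n + (jX (u' j) n - jX (x j) n)
      rw [← hdec j n]
      ring
    have hBj : ∀ t : ℝ, KLX jX t (u j) ≤ eLpNorm (g j) ⊤ (μcube d) := fun t =>
      KLX_le_of_represents jX (hurep j)
    have hmain := interp_le_of_bounds jX hθ hq hcj hBj
    rw [← hc0def, ← hc1def] at hmain
    have hyb : ENNReal.ofReal ‖u' j - x j‖ ≤ ENNReal.ofReal ((8*CB*(d:ℝ)+8)*s) := by
      refine ENNReal.ofReal_le_ofReal ?_
      calc ‖u' j - x j‖ ≤ ‖u' j‖ + ‖x j‖ := norm_sub_le _ _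
        _ ≤ 8*CB*(d:ℝ)*s + 8*s := add_le_add (hu'j j) (hxj j)
        _ = (8*CB*(d:ℝ)+8)*s := by ring
    have ht1 : 2 * interpLX jX θ q (v j) ≤ ENNReal.ofReal 2 * S := by
      rw [show ENNReal.ofReal 2 = (2:ℝ≥0∞) by norm_num]
      exact mul_le_mul_right (hIvS j) 2
    have ht2 : 2 * (1 + ENNReal.ofReal c0) * ENNReal.ofReal ‖u' j - x j‖
        ≤ ENNReal.ofReal (2*(1+c0)*(8*CB*(d:ℝ)+8)) * S := by
      have he : 2 * (1 + ENNReal.ofReal c0) = ENNReal.ofReal (2*(1+c0)) := by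
        rw [ENNReal.ofReal_mul (by norm_num : (0:ℝ) ≤ 2),
          ENNReal.ofReal_add (by norm_num : (0:ℝ) ≤ 1) hc0, ENNReal.ofReal_one]
        norm_num
      calc 2 * (1 + ENNReal.ofReal c0) * ENNReal.ofReal ‖u' j - x j‖
          ≤ 2 * (1 + ENNReal.ofReal c0) * ENNReal.ofReal ((8*CB*(d:ℝ)+8)*s) :=
            mul_le_mul_right hyb _
        _ = ENNReal.ofReal (2*(1+c0)*(8*CB*(d:ℝ)+8)) * ENNReal.ofReal s := by
            rw [he, ← ENNReal.ofReal_mul (by linarith : (0:ℝ) ≤ 2*(1+c0)),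
              show (2*(1+c0)) * ((8*CB*(d:ℝ)+8)*s) = (2*(1+c0)*(8*CB*(d:ℝ)+8))*s by ring,
              ENNReal.ofReal_mul hC1]
        _ = ENNReal.ofReal (2*(1+c0)*(8*CB*(d:ℝ)+8)) * S := by rw [hSofs]
    have ht3 : (1 + ENNReal.ofReal c1) * eLpNorm (g j) ⊤ (μcube d)
        ≤ ENNReal.ofReal ((1+c1)*(8+8*CB*(d:ℝ))) * S := by
      have he : (1:ℝ≥0∞) + ENNReal.ofReal c1 = ENNReal.ofReal (1+c1) := by
        rw [ENNReal.ofReal_add (by norm_num : (0:ℝ) ≤ 1) hc1, ENNReal.ofReal_one]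
      calc (1 + ENNReal.ofReal c1) * eLpNorm (g j) ⊤ (μcube d)
          ≤ (1 + ENNReal.ofReal c1) * (ENNReal.ofReal (8 + 8*CB*(d:ℝ)) * S) :=
            mul_le_mul_right (hgS j) _
        _ = ENNReal.ofReal ((1+c1)*(8+8*CB*(d:ℝ))) * S := by
            rw [he, ← mul_assoc, ← ENNReal.ofReal_mul (by linarith : (0:ℝ) ≤ 1+c1)]
    calc interpLX jX θ q (u j)
        ≤ 2 * interpLX jX θ q (v j)
          + 2 * (1 + ENNReal.ofReal c0) * ENNReal.ofReal ‖u' j - x j‖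
          + (1 + ENNReal.ofReal c1) * eLpNorm (g j) ⊤ (μcube d) := hmain
      _ ≤ ENNReal.ofReal 2 * S + ENNReal.ofReal (2*(1+c0)*(8*CB*(d:ℝ)+8)) * S
          + ENNReal.ofReal ((1+c1)*(8+8*CB*(d:ℝ))) * S :=
          add_le_add (add_le_add ht1 ht2) ht3
      _ = ENNReal.ofReal (C - 8) * S := by
          rw [← add_mul, ← add_mul, ← ENNReal.ofReal_add (by norm_num) hC1,
            ← ENNReal.ofReal_add (by linarith) hC2]
          congr 2
          rw [hCdef]
          ring
  -- assemble the conclusion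
  refine ⟨u, g, hurep, ?_, fun j => ⟨?_, ?_⟩⟩
  · -- divergence identity
    funext n
    rw [divC, divC]
    congr 1
    have hd' := congrFun hdiv' n
    rw [divC, divC] at hd'
    have h2πI : (2 * (Real.pi:ℂ) * Complex.I) ≠ 0 :=
      mul_ne_zero (mul_ne_zero two_ne_zero
        (Complex.ofReal_ne_zero.2 Real.pi_ne_zero)) Complex.I_ne_zero
    have hsum := mul_left_cancel₀ h2πI hd'
    have hvrw : ∀ i, v i n = coeffOf (f i) n + jX (x i) n := fun i => (hdec i n).symm
    calc ∑ i, (n i : ℂ) * u i n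
        = ∑ i, ((n i : ℂ) * coeffOf (f i) n + (n i : ℂ) * jX (u' i) n) := by
          refine Finset.sum_congr rfl fun i _ => ?_
          rw [hu]
          ring
      _ = ∑ i, (n i : ℂ) * coeffOf (f i) n + ∑ i, (n i : ℂ) * jX (u' i) n :=
          Finset.sum_add_distrib
      _ = ∑ i, (n i : ℂ) * coeffOf (f i) n + ∑ i, (n i : ℂ) * jX (x i) n := by
          rw [hsum]
      _ = ∑ i, ((n i : ℂ) * coeffOf (f i) n + (n i : ℂ) * jX (x i) n) :=
          Finset.sum_add_distrib.symm
      _ = ∑ i, (n i : ℂ) * v i n := by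
          refine Finset.sum_congr rfl fun i _ => ?_
          rw [hvrw i]
          ring
  · -- L^∞ bound
    refine le_trans (hgS j) ?_
    refine mul_le_mul_left (ENNReal.ofReal_le_ofReal ?_) S
    rw [hCdef]
    nlinarith [mul_nonneg hc1 (show (0:ℝ) ≤ 8+8*CB*(d:ℝ) by linarith)]
  · -- interpolation bound
    refine le_trans (huS j) ?_
    refine mul_le_mul_left (ENNReal.ofReal_le_ofReal ?_) S
    linarith
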